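/- Let ξ : ℝ → ℝ be continuously differentiable with ξ and ξ′ bounded, let η : ℝ → ℝ be bounded and continuous, let ψ be the flow of ξ∂_x, and set c(t,x) := ∫₀^t η(ψ(s,x)) ds. Then there exists a constant C ≥ 0, depending only on sup|η| and sup|ξ′|, such that for every measurable square-integrable f : ℝ → ℝ and every t ∈ ℝ, ∫_ℝ ( e^{c(t,x)} f(ψ(t,x)) )² dx ≤ e^{2C|t|} ∫_ℝ f(x)² dx; i.e. the weighted composition operator U_t^{ξ,η} f := e^{c(t,·)}·(f∘ψ(t,·)) is bounded on L²(ℝ) with ‖U_t^{ξ,η}‖ ≤ e^{C|t|}. -/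

import Mathlib

open MeasureTheory

open Set Real NNReal ENNReal

/-- Grönwall: two solutions of `x' = v(x)` diverge at most exponentially, forward in time. -/
lemma flow_dist_forward (v : ℝ → ℝ) (K : ℝ≥0) (hv : LipschitzWith K v)
    (f g : ℝ → ℝ) (hf : ∀ s, HasDerivAt f (v (f s)) s) (hg : ∀ s, HasDerivAt g (v (g s)) s)
    (t : ℝ) (ht : 0 ≤ t) :
    dist (f t) (g t) ≤ dist (f 0) (g 0) * Real.exp (K * t) := by
  have := dist_le_of_trajectories_ODE (v := fun _ x => v x) (K := K) (f := f) (g := g)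
    (a := 0) (b := t) (δ := dist (f 0) (g 0)) (fun _ => hv)
    (fun s _ => (hf s).continuousAt.continuousWithinAt)
    (fun s _ => (hf s).hasDerivWithinAt)
    (fun s _ => (hg s).continuousAt.continuousWithinAt)
    (fun s _ => (hg s).hasDerivWithinAt)
    le_rfl t ⟨ht, le_rfl⟩
  simpa using this

/-- Grönwall in both time directions. -/
lemma flow_dist (v : ℝ → ℝ) (K : ℝ≥0) (hv : LipschitzWith K v)
    (f g : ℝ → ℝ) (hf : ∀ s, HasDerivAt f (v (f s)) s) (hg : ∀ s, HasDerivAt g (v (g s)) s)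
    (t : ℝ) :
    dist (f t) (g t) ≤ dist (f 0) (g 0) * Real.exp (K * |t|) := by
  rcases le_or_gt 0 t with ht | ht
  · rw [abs_of_nonneg ht]; exact flow_dist_forward v K hv f g hf hg t ht
  · have hv' : LipschitzWith K (fun x => -(v x)) :=
      LipschitzWith.of_dist_le_mul fun x y => by
        simpa [dist_neg_neg] using hv.dist_le_mul x y
    have hf' : ∀ s, HasDerivAt (fun s => f (-s)) (-(v (f (-s)))) s := by
      intro s
      have := (hf (-s)).comp s (hasDerivAt_neg s)
      simpa [mul_comm, Function.comp_def] using this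
    have hg' : ∀ s, HasDerivAt (fun s => g (-s)) (-(v (g (-s)))) s := by
      intro s
      have := (hg (-s)).comp s (hasDerivAt_neg s)
      simpa [mul_comm, Function.comp_def] using this
    have := flow_dist_forward (fun x => -(v x)) K hv' (fun s => f (-s)) (fun s => g (-s))
      hf' hg' (-t) (by linarith)
    rw [abs_of_neg ht]
    simpa using this

/-- Uniqueness of solutions of `x' = v(x)`, both time directions. -/
lemma flow_unique (v : ℝ → ℝ) (K : ℝ≥0) (hv : LipschitzWith K v)
    (f g : ℝ → ℝ) (hf : ∀ s, HasDerivAt f (v (f s)) s) (hg : ∀ s, HasDerivAt g (v (g s)) s)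
    (h0 : f 0 = g 0) (t : ℝ) : f t = g t := by
  have := flow_dist v K hv f g hf hg t
  rw [h0, dist_self, zero_mul] at this
  exact dist_le_zero.mp this


/-- The weighted composition operator `U_t^{ξ,η} f := e^{c(t,·)}·(f∘ψ(t,·))`
is bounded on `L²(ℝ)` with norm at most `e^{C|t|}`. -/
theorem weighted_composition_L2_bound (ξ η : ℝ → ℝ) (ψ : ℝ → ℝ → ℝ)
    (c : ℝ → ℝ → ℝ)
    (hξ : ContDiff ℝ 1 ξ)
    (hξb : ∃ M, ∀ x, |ξ x| ≤ M) (hξ'b : ∃ M, ∀ x, |deriv ξ x| ≤ M)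
    (hη : Continuous η) (hηb : ∃ M, ∀ x, |η x| ≤ M)
    (hψ0 : ∀ x : ℝ, ψ 0 x = x)
    (hψ : ∀ (t x : ℝ), HasDerivAt (fun s => ψ s x) (ξ (ψ t x)) t)
    (hc : ∀ (t x : ℝ), c t x = ∫ s in (0:ℝ)..t, η (ψ s x)) :
    ∃ C : ℝ, 0 ≤ C ∧
      ∀ f : ℝ → ℝ, Measurable f → Integrable (fun x => (f x) ^ 2) →
        ∀ t : ℝ,
          ∫ x : ℝ, (Real.exp (c t x) * f (ψ t x)) ^ 2
            ≤ Real.exp (2 * C * |t|) * ∫ x : ℝ, (f x) ^ 2 := by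
  obtain ⟨Mη, hMη⟩ := hηb
  obtain ⟨M', hM'⟩ := hξ'b
  set Nη : ℝ := max Mη 0 with hNηdef
  have hNη0 : 0 ≤ Nη := le_max_right _ _
  have hηN : ∀ x, |η x| ≤ Nη := fun x => (hMη x).trans (le_max_left _ _)
  set L : ℝ≥0 := Real.toNNReal M' with hLdef
  have hlipξ : LipschitzWith L ξ := by
    apply lipschitzWith_of_nnnorm_deriv_le (hξ.differentiable one_ne_zero)
    intro x
    rw [← NNReal.coe_le_coe, coe_nnnorm, Real.norm_eq_abs, hLdef, Real.coe_toNNReal']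
    exact (hM' x).trans (le_max_left _ _)
  refine ⟨Nη + (L : ℝ), by positivity, ?_⟩
  intro f hfm hf2 t
  set A : ℝ := Real.exp (2 * Nη * |t|) with hAdef
  set B : ℝ := Real.exp ((L : ℝ) * |t|) with hBdef
  -- bound on c
  have hcb : ∀ x, |c t x| ≤ Nη * |t| := by
    intro x
    rw [hc]
    have := intervalIntegral.norm_integral_le_of_norm_le_const
      (a := 0) (b := t) (C := Nη) (f := fun s => η (ψ s x))
      (fun s _ => by simpa [Real.norm_eq_abs] using hηN (ψ s x))
    simpa [Real.norm_eq_abs] using this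
  have hψs : ∀ x, ∀ s, HasDerivAt (fun u => ψ u x) (ξ (ψ s x)) s := fun x s => hψ s x
  -- Lipschitz bound for the flow in the space variable
  have hlipflow : ∀ (τ : ℝ) (x y : ℝ),
      dist (ψ τ x) (ψ τ y) ≤ Real.exp ((L : ℝ) * |τ|) * dist x y := by
    intro τ x y
    have := flow_dist ξ L hlipξ (fun u => ψ u x) (fun u => ψ u y) (hψs x) (hψs y) τ
    rw [hψ0, hψ0] at this
    simpa [mul_comm] using this
  -- inverse flow identities
  have hinv : ∀ (τ x : ℝ), ψ (-τ) (ψ τ x) = x := by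
    intro τ x
    have hw : ∀ s, HasDerivAt (fun u => ψ (u + τ) x) (ξ (ψ (s + τ) x)) s := by
      intro s
      have h1 : HasDerivAt (fun u : ℝ => u + τ) 1 s := (hasDerivAt_id s).add_const τ
      have := (hψ (s + τ) x).comp s h1
      simpa [Function.comp_def] using this
    have := flow_unique ξ L hlipξ (fun u => ψ u (ψ τ x)) (fun u => ψ (u + τ) x)
      (hψs (ψ τ x)) hw (by simp [hψ0]) (-τ)
    simpa [hψ0] using this
  have hinv' : ∀ (τ x : ℝ), ψ τ (ψ (-τ) x) = x := by
    intro τ x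
    have := hinv (-τ) x
    rwa [neg_neg] at this
  -- preimage under ψ t = image under ψ (-t)
  have hpre : ∀ s : Set ℝ, ψ t ⁻¹' s = ψ (-t) '' s := by
    intro s
    ext x
    constructor
    · intro hx
      exact ⟨ψ t x, hx, hinv t x⟩
    · rintro ⟨y, hy, rfl⟩
      have : ψ t (ψ (-t) y) = y := hinv' t y
      simpa [Set.mem_preimage, this] using hy
  set Kt : ℝ≥0 := Real.toNNReal B with hKtdef
  have hcoeKt : (Kt : ℝ) = B := Real.coe_toNNReal _ (Real.exp_nonneg _)
  have hKtinv : LipschitzWith Kt (ψ (-t)) :=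
    LipschitzWith.of_dist_le_mul fun x y => by
      rw [hcoeKt, hBdef]
      simpa [abs_neg] using hlipflow (-t) x y
  have hKtfwd : LipschitzWith Kt (ψ t) :=
    LipschitzWith.of_dist_le_mul fun x y => by
      rw [hcoeKt, hBdef]; exact hlipflow t x y
  have hmψ : Measurable (ψ t) := hKtfwd.continuous.measurable
  -- measure bound
  have hmeas_bound : ∀ s : Set ℝ, volume (ψ t ⁻¹' s) ≤ (Kt : ℝ≥0∞) * volume s := by
    intro s
    rw [hpre s, ← MeasureTheory.hausdorffMeasure_real]
    simpa using hKtinv.hausdorffMeasure_image_le (d := 1) zero_le_one s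
  have hmapped : Measure.map (ψ t) volume ≤ (Kt : ℝ≥0∞) • volume := by
    rw [Measure.le_iff]
    intro s hs
    rw [Measure.map_apply hmψ hs]
    simpa using hmeas_bound s
  set G : ℝ → ℝ≥0∞ := fun y => ENNReal.ofReal ((f y) ^ 2) with hGdef
  have hG : Measurable G := (hfm.pow_const 2).ennreal_ofReal
  -- pointwise bound
  have hpt : ∀ x, ENNReal.ofReal ((Real.exp (c t x) * f (ψ t x)) ^ 2)
      ≤ ENNReal.ofReal A * G (ψ t x) := by
    intro x
    rw [hGdef, ← ENNReal.ofReal_mul (Real.exp_nonneg _)]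
    apply ENNReal.ofReal_le_ofReal
    rw [mul_pow]
    have h1 : (Real.exp (c t x)) ^ 2 ≤ A := by
      rw [pow_two, ← Real.exp_add, hAdef]
      apply Real.exp_le_exp.mpr
      have := (abs_le.mp (hcb x)).2
      linarith
    exact mul_le_mul_of_nonneg_right h1 (sq_nonneg _)
  -- lintegral chain
  have hlin : ∫⁻ x, ENNReal.ofReal ((Real.exp (c t x) * f (ψ t x)) ^ 2)
      ≤ ENNReal.ofReal A * ((Kt : ℝ≥0∞) * ∫⁻ y, G y) := by
    calc ∫⁻ x, ENNReal.ofReal ((Real.exp (c t x) * f (ψ t x)) ^ 2)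
        ≤ ∫⁻ x, ENNReal.ofReal A * G (ψ t x) := lintegral_mono hpt
      _ = ENNReal.ofReal A * ∫⁻ x, G (ψ t x) :=
          lintegral_const_mul' _ _ ENNReal.ofReal_ne_top
      _ = ENNReal.ofReal A * ∫⁻ y, G y ∂(Measure.map (ψ t) volume) := by
          rw [lintegral_map hG hmψ]
      _ ≤ ENNReal.ofReal A * ∫⁻ y, G y ∂((Kt : ℝ≥0∞) • volume) :=
          mul_le_mul_right (lintegral_mono' hmapped le_rfl) _
      _ = ENNReal.ofReal A * ((Kt : ℝ≥0∞) * ∫⁻ y, G y) := by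
          rw [lintegral_smul_measure, smul_eq_mul]
  set If : ℝ := ∫ x : ℝ, (f x) ^ 2 with hIfdef
  have hIf : (0 : ℝ) ≤ If := integral_nonneg fun x => sq_nonneg _
  have hI2 : ∫⁻ y, G y = ENNReal.ofReal If :=
    (ofReal_integral_eq_lintegral_ofReal hf2
      (Filter.Eventually.of_forall fun x => sq_nonneg _)).symm
  have hABI : A * (B * If) ≤ Real.exp (2 * (Nη + (L : ℝ)) * |t|) * If := by
    have hAB : A * B ≤ Real.exp (2 * (Nη + (L : ℝ)) * |t|) := by
      rw [hAdef, hBdef, ← Real.exp_add]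
      apply Real.exp_le_exp.mpr
      have h0L : (0 : ℝ) ≤ (L : ℝ) := L.coe_nonneg
      have h0t : (0 : ℝ) ≤ |t| := abs_nonneg t
      nlinarith
    calc A * (B * If) = (A * B) * If := by ring
      _ ≤ _ := mul_le_mul_of_nonneg_right hAB hIf
  by_cases hm : AEStronglyMeasurable (fun x => (Real.exp (c t x) * f (ψ t x)) ^ 2) volume
  · rw [integral_eq_lintegral_of_nonneg_ae
      (Filter.Eventually.of_forall fun x => sq_nonneg _) hm]
    have hfin : ENNReal.ofReal A * ((Kt : ℝ≥0∞) * ∫⁻ y, G y)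
        = ENNReal.ofReal (A * (B * If)) := by
      rw [hI2, ENNReal.ofReal_mul (Real.exp_nonneg _),
        ENNReal.ofReal_mul (Real.exp_nonneg _)]
      rfl
    calc (∫⁻ x, ENNReal.ofReal ((Real.exp (c t x) * f (ψ t x)) ^ 2)).toReal
        ≤ (ENNReal.ofReal (A * (B * If))).toReal :=
          ENNReal.toReal_mono ENNReal.ofReal_ne_top (hfin ▸ hlin)
      _ = A * (B * If) := ENNReal.toReal_ofReal (by positivity)
      _ ≤ Real.exp (2 * (Nη + (L : ℝ)) * |t|) * If := hABI
  · rw [integral_undef (fun h => hm h.aestronglyMeasurable)]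
    exact mul_nonneg (Real.exp_nonneg _) hIf
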